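/- arXiv:hep-th/9409063 — 2 statements merged into one kernel-verified Lean document; each statement's English description precedes it below -/
import Mathlib

section
/- Let m be a multiplication on a brace algebra V, with product x·y := (-1)^{|x|+1} m{x,y} and differential dx := m∘x - (-1)^{|x|} x∘m. Then d is a graded derivation of the product: d(x·y) = (dx)·y + (-1)^{deg x} x·(dy), so (V, ·, d) is a differential graded associative algebra. -/
/-- `(-1)^n` as an integer, for `n : ℤ`. -/
def pSgn (n : ℤ) : ℤ := (((-1 : ℤˣ) ^ n : ℤˣ) : ℤ)

/-- All splittings of a list into a prefix and a suffix. -/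
def splits {α : Type*} : List α → List (List α × List α)
  | [] => [([], [])]
  | a :: l => ([], a :: l) :: (splits l).map (fun p => (a :: p.1, p.2))

/-- Auxiliary enumeration of all interleavings appearing on the right-hand side of the
brace identity.  Elements are paired with their (actual) degree; the reduced degree used
in signs is `deg - 1`.  `b p l` is the inner brace `p.1{l}`. -/
def braceInterAux {V : Type*} (b : V × ℤ → List V → V) :
    ℕ → List (V × ℤ) → List (V × ℤ) → List (ℤ × List V)
  | _, [], ys => [(0, ys.map Prod.fst)]
  | 0, _ :: _, _ => []
  | fuel + 1, x :: xs, ys =>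
      (match ys with
        | [] => ([] : List (ℤ × List V))
        | y :: ys' =>
            (braceInterAux b fuel (x :: xs) ys').map
              (fun t => (t.1 + (y.2 - 1) * (((x :: xs).map (fun q => q.2 - 1)).sum),
                y.1 :: t.2)))
      ++ (splits ys).flatMap (fun p =>
          (braceInterAux b fuel xs p.2).map
            (fun t => (t.1 + ((p.1.map (fun q => q.2 - 1)).sum) *
                ((xs.map (fun q => q.2 - 1)).sum),
              b x (p.1.map Prod.fst) :: t.2)))

/-- The list of signed terms `(ε, [y₁,…,x₁{y_{i₁+1},…,y_{j₁}},…,y_n])` appearing in the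
right-hand side of the brace identity
`x{x₁,…,x_m}{y₁,…,y_n} = Σ ± x{y₁,…,x₁{…},…,x_m{…},…,y_n}`. -/
def braceInter {V : Type*} (b : V × ℤ → List V → V)
    (xs ys : List (V × ℤ)) : List (ℤ × List V) :=
  braceInterAux b (xs.length + ys.length) xs ys

/-- A brace algebra: a graded vector space `V = ⊕ V_n` with multilinear braces
`x{x₁,…,x_n}` of degree `-n` satisfying the brace identity (for homogeneous elements;
the degree of a homogeneous element is recorded in the second component of pairs,
and `|x| = deg x - 1`). -/
structure BraceAlgebraOn (k : Type*) [Field k] (V : Type*) [AddCommGroup V] [Module k V] where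
  grading : ℤ → Submodule k V
  brace : V → List V → V
  brace_nil : ∀ x, brace x [] = x
  brace_add_left : ∀ x y l, brace (x + y) l = brace x l + brace y l
  brace_smul_left : ∀ (c : k) x l, brace (c • x) l = c • brace x l
  brace_add_arg : ∀ x l₁ y z l₂,
    brace x (l₁ ++ (y + z) :: l₂) = brace x (l₁ ++ y :: l₂) + brace x (l₁ ++ z :: l₂)
  brace_smul_arg : ∀ x l₁ (c : k) y l₂,
    brace x (l₁ ++ (c • y) :: l₂) = c • brace x (l₁ ++ y :: l₂)
  brace_deg : ∀ (d : ℤ) (x : V) (l : List (V × ℤ)), x ∈ grading d →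
    (∀ p ∈ l, p.1 ∈ grading p.2) →
    brace x (l.map Prod.fst) ∈ grading (d + (l.map Prod.snd).sum - l.length)
  brace_identity : ∀ (x : V) (xs ys : List (V × ℤ)),
    (∀ p ∈ xs, p.1 ∈ grading p.2) → (∀ p ∈ ys, p.1 ∈ grading p.2) →
    brace (brace x (xs.map Prod.fst)) (ys.map Prod.fst)
      = ((braceInter (fun p l => brace p.1 l) xs ys).map
          (fun t => pSgn t.1 • brace x t.2)).sum

variable {k : Type*} [Field k] {V : Type*} [AddCommGroup V] [Module k V]

/-- The circle product `x ∘ y := x{y}`. -/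
def bCirc (B : BraceAlgebraOn k V) (x y : V) : V := B.brace x [y]

/-- The degree `-1` bracket `[x,y] := x∘y - (-1)^{|x||y|} y∘x`, where `a = |x|`, `b = |y|`
are the desuspended (reduced) degrees. -/
def bBrk (B : BraceAlgebraOn k V) (a b : ℤ) (x y : V) : V :=
  B.brace x [y] - pSgn (a * b) • B.brace y [x]

/-- The differential `d x := m∘x - (-1)^{|x|} x∘m` determined by a multiplication `m`,
where `a = |x|` is the reduced degree of `x`. -/
def bD (B : BraceAlgebraOn k V) (m : V) (a : ℤ) (x : V) : V :=
  B.brace m [x] - pSgn a • B.brace x [m]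

/-- The dot product `x·y := (-1)^{|x|+1} m{x,y}` determined by a multiplication `m`,
where `a = |x|` is the reduced degree of `x`. -/
def bDot (B : BraceAlgebraOn k V) (m : V) (a : ℤ) (x y : V) : V :=
  pSgn (a + 1) • B.brace m [x, y]

/-!
Apply the brace identity to `m{m}{x,y}`, which vanishes because `m∘m = 0`, and to `m{x,y}{m}`.
Both expansions contain the three terms `m{m,x,y}`, `m{x,m,y}`, `m{x,y,m}`, which cancel in the
signed combination `m{m{x,y}} + (-1)^{|x|+|y|} m{x,y}{m} = d(m{x,y})`; what remains is
`-(m{dx,y} + (-1)^{|x|} m{x,dy})`, and the signs in the dot product turn this into the Leibniz rule.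
-/

theorem pSgn_eq_negOnePow (n : ℤ) : pSgn n = n.negOnePow := rfl

theorem pSgn_zero : pSgn 0 = 1 := rfl

theorem pSgn_one : pSgn 1 = -1 := rfl

theorem pSgn_add (n₁ n₂ : ℤ) : pSgn (n₁ + n₂) = pSgn n₁ * pSgn n₂ := by
  rw [pSgn_eq_negOnePow, Int.negOnePow_add, Units.val_mul]; rfl

theorem pSgn_sub_one (n : ℤ) : pSgn (n - 1) = -pSgn n := by
  rw [pSgn_eq_negOnePow, Int.negOnePow_sub, Int.negOnePow_one, mul_neg_one, Units.val_neg]; rfl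

theorem pSgn_eq_one_or_neg_one (n : ℤ) : pSgn n = 1 ∨ pSgn n = -1 := by
  rw [pSgn_eq_negOnePow]
  rcases Int.units_eq_one_or n.negOnePow with h | h <;> simp [h]

namespace BraceAlgebraOn

variable (B : BraceAlgebraOn k V)

def braceLeftHom (l : List V) : V →+ V :=
  AddMonoidHom.mk' (B.brace · l) (fun u v => B.brace_add_left u v l)

def braceArgHom (x : V) (l₁ l₂ : List V) : V →+ V :=
  AddMonoidHom.mk' (fun y => B.brace x (l₁ ++ y :: l₂))
    (fun u v => B.brace_add_arg x l₁ u v l₂)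

theorem brace_zero_left (l : List V) : B.brace 0 l = 0 :=
  (B.braceLeftHom l).map_zero

theorem brace_zsmul_left (n : ℤ) (v : V) (l : List V) : B.brace (n • v) l = n • B.brace v l :=
  (B.braceLeftHom l).map_zsmul n v

theorem brace_zsmul_singleton (x : V) (n : ℤ) (v : V) :
    B.brace x [n • v] = n • B.brace x [v] :=
  (B.braceArgHom x [] []).map_zsmul n v

theorem brace_sub_pair_left (x u v w : V) :
    B.brace x [u - v, w] = B.brace x [u, w] - B.brace x [v, w] :=
  (B.braceArgHom x [] [w]).map_sub u v

theorem brace_zsmul_pair_left (x : V) (n : ℤ) (v w : V) :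
    B.brace x [n • v, w] = n • B.brace x [v, w] :=
  (B.braceArgHom x [] [w]).map_zsmul n v

theorem brace_sub_pair_right (x w u v : V) :
    B.brace x [w, u - v] = B.brace x [w, u] - B.brace x [w, v] :=
  (B.braceArgHom x [w] []).map_sub u v

theorem brace_zsmul_pair_right (x w : V) (n : ℤ) (v : V) :
    B.brace x [w, n • v] = n • B.brace x [w, v] :=
  (B.braceArgHom x [w] []).map_zsmul n v

variable {B} {z u v w : V} {p q r : ℤ}

theorem brace_singleton_brace_pair (hu : u ∈ B.grading p) (hv : v ∈ B.grading q)
    (hw : w ∈ B.grading r) :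
    B.brace (B.brace z [u]) [v, w] =
      B.brace z [B.brace u [v, w]] + B.brace z [B.brace u [v], w]
        + pSgn ((p - 1) * (q - 1)) • B.brace z [v, B.brace u [w]]
        + B.brace z [u, v, w] + pSgn ((p - 1) * (q - 1)) • B.brace z [v, u, w]
        + pSgn ((p - 1) * (q - 1 + (r - 1))) • B.brace z [v, w, u] := by
  have h := B.brace_identity z [(u, p)] [(v, q), (w, r)] (by simpa using hu) (by simp [hv, hw])
  simp only [braceInter, braceInterAux, splits, List.map, List.flatMap, List.flatten,
    List.length, List.sum_cons, List.sum_nil, List.nil_append, B.brace_nil] at h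
  rw [h]
  simp only [List.append_eq, List.cons_append, List.nil_append, List.map_cons, List.map_nil,
    List.sum_cons, List.sum_nil, mul_zero, add_zero, zero_add, pSgn_zero, one_smul]
  rw [show (r - 1) * (p - 1) + (q - 1) * (p - 1) = (p - 1) * (q - 1 + (r - 1)) by ring,
    mul_comm (q - 1)]
  abel

theorem brace_pair_brace_singleton (hu : u ∈ B.grading p) (hv : v ∈ B.grading q)
    (hw : w ∈ B.grading r) :
    B.brace (B.brace z [v, w]) [u] =
      B.brace z [v, B.brace w [u]] + pSgn ((p - 1) * (r - 1)) • B.brace z [B.brace v [u], w]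
        + pSgn ((p - 1) * (q - 1 + (r - 1))) • B.brace z [u, v, w]
        + pSgn ((p - 1) * (r - 1)) • B.brace z [v, u, w] + B.brace z [v, w, u] := by
  have h := B.brace_identity z [(v, q), (w, r)] [(u, p)] (by simp [hv, hw]) (by simpa using hu)
  simp only [braceInter, braceInterAux, splits, List.map, List.flatMap, List.flatten,
    List.length, List.sum_cons, List.sum_nil, List.nil_append, B.brace_nil] at h
  rw [h]
  simp only [List.append_eq, List.cons_append, List.nil_append, List.map_cons, List.map_nil,
    List.sum_cons, List.sum_nil, List.append_nil, mul_zero, zero_mul, add_zero, zero_add,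
    pSgn_zero, one_smul]
  abel

end BraceAlgebraOn

theorem bD_zsmul (B : BraceAlgebraOn k V) (m : V) (c n : ℤ) (v : V) :
    bD B m c (n • v) = n • bD B m c v := by
  rw [bD, bD, B.brace_zsmul_singleton, B.brace_zsmul_left, smul_sub, smul_comm n]

theorem bD_brace_pair {B : BraceAlgebraOn k V} {m x y : V} {a b : ℤ}
    (hm : m ∈ B.grading 2) (hmm : B.brace m [m] = 0)
    (hx : x ∈ B.grading a) (hy : y ∈ B.grading b) :
    bD B m (a + b - 1) (B.brace m [x, y])
      = -(B.brace m [bD B m (a - 1) x, y] + pSgn (a - 1) • B.brace m [x, bD B m (b - 1) y]) := by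
  have h₁ := BraceAlgebraOn.brace_singleton_brace_pair (z := m) hm hx hy
  have h₂ := BraceAlgebraOn.brace_pair_brace_singleton (z := m) hm hx hy
  rw [hmm, B.brace_zero_left] at h₁
  norm_num only [one_mul] at h₁ h₂
  simp only [bD, B.brace_sub_pair_left, B.brace_sub_pair_right, B.brace_zsmul_pair_left,
    B.brace_zsmul_pair_right]
  simp only [pSgn_sub_one, pSgn_add] at h₁ h₂ ⊢
  have hs := pSgn_eq_one_or_neg_one a
  have ht := pSgn_eq_one_or_neg_one b
  generalize pSgn a = s at *
  generalize pSgn b = t at *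
  linear_combination (norm := skip) (s * t) • h₂ - h₁
  rcases hs with rfl | rfl <;> rcases ht with rfl | rfl <;> module

/-- If `m` is a multiplication on a brace algebra `V`, then
`d` is a graded derivation of the dot product:
`d(x·y) = (dx)·y + (-1)^{deg x} x·(dy)`, so `(V, ·, d)` is a DG associative algebra. -/
theorem brace_d_leibniz (B : BraceAlgebraOn k V) (m : V)
    (hm : m ∈ B.grading 2) (hmm : B.brace m [m] = 0) (a b : ℤ) (x y : V)
    (hx : x ∈ B.grading a) (hy : y ∈ B.grading b) :
    bD B m (a + b - 1) (bDot B m (a - 1) x y)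
      = bDot B m a (bD B m (a - 1) x) y
        + pSgn a • bDot B m (a - 1) x (bD B m (b - 1) y) := by
  rw [bDot, sub_add_cancel, bD_zsmul, bD_brace_pair hm hmm hx hy, bDot, bDot, sub_add_cancel,
    pSgn_add, pSgn_one, pSgn_sub_one]
  module
end

section
/- In every homotopy G-algebra, the differential is a derivation of the Gerstenhaber bracket: d[x,y] - [dx,y] - (-1)^{|x|} [x,dy] = 0, where [x,y] := x∘y - (-1)^{|x||y|} y∘x. Hence (V, [·,·], d) is a DG Lie algebra. -/
variable {k : Type*} [Field k] {V : Type*} [AddCommGroup V] [Module k V]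

/-- A homotopy G-algebra: a brace algebra `V` with a degree-1 differential `d` and a
degree-0 associative dot product making `V` a DG associative algebra, satisfying the
distributivity identity and the homotopy-compatibility identity (stated for homogeneous
elements, whose degrees are recorded as hypotheses; `|x| = deg x - 1`). -/
structure HGAlgebraOn (k : Type*) [Field k] (V : Type*) [AddCommGroup V] [Module k V]
    extends BraceAlgebraOn k V where
  d : V → V
  d_add : ∀ x y, d (x + y) = d x + d y
  d_smul : ∀ (c : k) x, d (c • x) = c • d x
  d_deg : ∀ (n : ℤ) x, x ∈ grading n → d x ∈ grading (n + 1)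
  d_sq : ∀ x, d (d x) = 0
  dot : V → V → V
  dot_add_left : ∀ x y z, dot (x + y) z = dot x z + dot y z
  dot_add_right : ∀ x y z, dot x (y + z) = dot x y + dot x z
  dot_smul_left : ∀ (c : k) x y, dot (c • x) y = c • dot x y
  dot_smul_right : ∀ (c : k) x y, dot x (c • y) = c • dot x y
  dot_deg : ∀ (a b : ℤ) x y, x ∈ grading a → y ∈ grading b → dot x y ∈ grading (a + b)
  dot_assoc : ∀ x y z, dot (dot x y) z = dot x (dot y z)
  d_leibniz : ∀ (a : ℤ) x y, x ∈ grading a →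
    d (dot x y) = dot (d x) y + pSgn a • dot x (d y)
  distrib : ∀ (a₂ : ℤ) (x₁ x₂ : V), x₂ ∈ grading a₂ →
    ∀ ys : List (V × ℤ), (∀ p ∈ ys, p.1 ∈ grading p.2) →
    brace (dot x₁ x₂) (ys.map Prod.fst)
      = ((splits ys).map (fun p =>
          pSgn ((a₂ - 1) * ((p.1.map (fun q => q.2 - 1)).sum)) •
            dot (brace x₁ (p.1.map Prod.fst)) (brace x₂ (p.2.map Prod.fst)))).sum
  compat : ∀ (dx : ℤ) (x : V), x ∈ grading dx →
    ∀ (n : ℕ) (ys : Fin (n + 1) → V) (ds : Fin (n + 1) → ℤ),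
    (∀ i, ys i ∈ grading (ds i)) →
    d (brace x (List.ofFn ys)) - brace (d x) (List.ofFn ys)
      - pSgn (dx - 1) • ∑ i : Fin (n + 1),
          pSgn (∑ j : Fin (n + 1), if (j : ℕ) < (i : ℕ) then ds j - 1 else 0) •
            brace x (List.ofFn fun j => if j = i then d (ys j) else ys j)
    = pSgn ((dx - 1) * (ds 0 - 1) + 1) •
          dot (ys 0) (brace x (List.ofFn fun j : Fin n => ys j.succ))
      + pSgn (dx - 1) • ∑ i : Fin n,
          pSgn (∑ j : Fin (n + 1), if (j : ℕ) < (i : ℕ) then ds j - 1 else 0) •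
            brace x (List.ofFn fun j : Fin n =>
              if (j : ℕ) < (i : ℕ) then ys j.castSucc
              else if (j : ℕ) = (i : ℕ) then dot (ys i.castSucc) (ys i.succ)
              else ys j.succ)
      - dot (brace x (List.ofFn fun j : Fin n => ys j.castSucc)) (ys (Fin.last n))

/-- In every homotopy G-algebra the differential is a derivation of the
Gerstenhaber bracket: `d[x,y] - [dx,y] - (-1)^{|x|}[x,dy] = 0`.  Hence `(V,[·,·],d)` is a
DG Lie algebra. -/
theorem hG_d_derivation_of_bracket (H : HGAlgebraOn k V) (a b : ℤ) (x y : V)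
    (hx : x ∈ H.grading a) (hy : y ∈ H.grading b) :
    H.d (H.brace x [y] - pSgn ((a - 1) * (b - 1)) • H.brace y [x])
      - (H.brace (H.d x) [y] - pSgn (a * (b - 1)) • H.brace y [H.d x])
      - pSgn (a - 1) •
          (H.brace x [H.d y] - pSgn ((a - 1) * b) • H.brace (H.d y) [x]) = 0 := by
  have e1 := H.compat a x hx 0 ![y] ![b] (by intro i; fin_cases i; simpa using hy)
  have e2 := H.compat b y hy 0 ![x] ![a] (by intro i; fin_cases i; simpa using hx)
  simp [Fin.sum_univ_one, H.brace_nil, Fin.last] at e1 e2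
  have pSgn_add : ∀ m n : ℤ, pSgn (m + n) = pSgn m * pSgn n := by
    intro m n; simp [pSgn, zpow_add]
  have pSgn_zero : pSgn 0 = 1 := by simp [pSgn]
  have pSgn_one : pSgn 1 = -1 := by simp [pSgn]
  have pSgn_even : ∀ c : ℤ, pSgn (2 * c) = 1 := by
    intro c
    have h2 : ((-1 : ℤˣ)) ^ (2 : ℤ) = 1 := by decide
    simp [pSgn, zpow_mul, h2]
  have hq1 : pSgn (a * (b - 1)) = pSgn ((a - 1) * (b - 1)) * pSgn (b - 1) := by
    rw [← pSgn_add]; ring_nf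
  have hq2 : pSgn (a - 1) * pSgn ((a - 1) * b) = pSgn ((a - 1) * (b - 1)) := by
    rw [← pSgn_add, show (a - 1) + (a - 1) * b = (a - 1) * (b - 1) + 2 * (a - 1) by ring,
      pSgn_add, pSgn_even, mul_one]
  have hq3 : pSgn ((a - 1) * (b - 1) + 1) = -pSgn ((a - 1) * (b - 1)) := by
    rw [pSgn_add, pSgn_one]; ring
  have hq4 : pSgn ((b - 1) * (a - 1) + 1) = -pSgn ((a - 1) * (b - 1)) := by
    rw [mul_comm (b-1), hq3]
  have hD : ∀ u v : V, H.d (u - v) = H.d u - H.d v :=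
    fun u v => map_sub (AddMonoidHom.mk' H.d H.d_add) u v
  have hDz : ∀ (n : ℤ) (u : V), H.d (n • u) = n • H.d u :=
    fun n u => map_zsmul (AddMonoidHom.mk' H.d H.d_add) n u
  rw [hD, hDz]
  rw [pSgn_zero, one_smul] at e1 e2
  rw [hq3] at e1
  rw [hq4] at e2
  rw [hq1, smul_sub, smul_smul, hq2]
  have hr : pSgn ((a - 1) * (b - 1)) = 1 ∨ pSgn ((a - 1) * (b - 1)) = -1 :=
    Int.isUnit_iff.mp ⟨_, rfl⟩
  rcases hr with hr | hr <;> rw [hr] at e1 e2 ⊢ <;>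
    [linear_combination (norm := module) e1 - e2;
     linear_combination (norm := module) e1 + e2]
end
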